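/- With the setup of ≤_O and L = I∪J∪K: M ∩ W_L = {u v* : u, v ∈ W_I, ℓ(u v⁻¹) = ℓ(u) + ℓ(v)}, where M is the set of all elements that have minimal length in their coset modulo W_K W_{I,J}. -/

import Mathlib

section BruhatSetup

variable {B : Type*} {W : Type*} [Group W] {M : CoxeterMatrix B}

/-- Strong Bruhat order: `u ≤ v` iff every reduced word for `v` has a sublist
that is a reduced word for `u`. -/
def BruhatLE (cs : CoxeterSystem M W) (u v : W) : Prop :=
  ∀ ω : List B, cs.IsReduced ω → cs.wordProd ω = v →
    ∃ ω' : List B, List.Sublist ω' ω ∧ cs.IsReduced ω' ∧ cs.wordProd ω' = u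

/-- Strict strong Bruhat order. -/
def BruhatLT (cs : CoxeterSystem M W) (u v : W) : Prop :=
  BruhatLE cs u v ∧ u ≠ v

/-- The standard parabolic subgroup `W_L` generated by the simple reflections in `L`. -/
def parab (cs : CoxeterSystem M W) (L : Set B) : Subgroup W :=
  Subgroup.closure (cs.simple '' L)

/-- The set `W^L` of minimal length coset representatives for `W / W_L`. -/
def minReps (cs : CoxeterSystem M W) (L : Set B) : Set W :=
  {w : W | ∀ i ∈ L, cs.length w < cs.length (w * cs.simple i)}

/-- Right weak order: `v ≤_R w` iff `ℓ(w) = ℓ(w v⁻¹) + ℓ(v)`. -/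
def leR (cs : CoxeterSystem M W) (v w : W) : Prop :=
  cs.length w = cs.length (w * v⁻¹) + cs.length v

/-- The setup of the order `≤_O`: `I`, `J`, `K` are pairwise disjoint and pairwise
disconnected subsets of the simple system (so that `W_{I∪J∪K} = W_I × W_J × W_K`),
and `σ : x ↦ x*` restricts to an isomorphism of Coxeter groups `W_I → W_J`
(a bijective group homomorphism sending simple reflections to simple reflections). -/
structure GoodSetup (cs : CoxeterSystem M W) (I J K : Set B) (σ : W → W) : Prop where
  disjIJ : Disjoint I J
  disjIK : Disjoint I K
  disjJK : Disjoint J K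
  commIJ : ∀ i ∈ I, ∀ j ∈ J, Commute (cs.simple i) (cs.simple j)
  commIK : ∀ i ∈ I, ∀ k ∈ K, Commute (cs.simple i) (cs.simple k)
  commJK : ∀ j ∈ J, ∀ k ∈ K, Commute (cs.simple j) (cs.simple k)
  directProd : ∀ x ∈ parab cs I, ∀ y ∈ parab cs J, ∀ z ∈ parab cs K,
    x * y * z = 1 → x = 1 ∧ y = 1 ∧ z = 1
  mulSigma : ∀ x ∈ parab cs I, ∀ y ∈ parab cs I, σ (x * y) = σ x * σ y
  bijSigma : Set.BijOn σ (parab cs I : Set W) (parab cs J : Set W)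
  simpleSigma : ∀ i ∈ I, ∃ j ∈ J, σ (cs.simple i) = cs.simple j

/-- Membership in the coset `[w] = w · W_K · W_{I,J}` where `W_{I,J} = {x x* : x ∈ W_I}`. -/
def inCoset (cs : CoxeterSystem M W) (I K : Set B) (σ : W → W) (w u : W) : Prop :=
  ∃ a ∈ parab cs K, ∃ x ∈ parab cs I, u = w * a * (x * σ x)

/-- The relation `≤_O`: `w' ≤_O w` iff some `u ∈ [w']` satisfies `u ≤ w` in Bruhat order. -/
def leO (cs : CoxeterSystem M W) (I K : Set B) (σ : W → W) (w' w : W) : Prop :=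
  ∃ u, inCoset cs I K σ w' u ∧ BruhatLE cs u w

/-- The strict relation associated to `≤_O`. -/
def ltO (cs : CoxeterSystem M W) (I K : Set B) (σ : W → W) (w' w : W) : Prop :=
  leO cs I K σ w' w ∧ w' ≠ w

/-- `Min(w)`: the elements of the coset `[w]` of length `ℓ(w)`. -/
def MinC (cs : CoxeterSystem M W) (I K : Set B) (σ : W → W) (w : W) : Set W :=
  {u : W | inCoset cs I K σ w u ∧ cs.length u = cs.length w}

/-- The set `M` of all elements having minimal length in their coset mod `W_K W_{I,J}`. -/
def Mset (cs : CoxeterSystem M W) (I J K : Set B) (σ : W → W) : Set W :=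
  {u : W | ∃ w ∈ minReps cs (J ∪ K), u ∈ MinC cs I K σ w}

/-!
Inside `W_L = W_I × W_J × W_K` lengths add over the three factors, so a minimal representative
`w` of its coset modulo `W_{J ∪ K}` lies in `W_I`. For `z = w a (x x*)` with `a ∈ W_K`, `x ∈ W_I`
we get `z = (w x) x* a` and `ℓ z = ℓ (w x) + ℓ x + ℓ a`; as `ℓ w ≤ ℓ (w x) + ℓ x`, the condition
`ℓ z = ℓ w` forces `a = 1` and `ℓ w = ℓ (w x) + ℓ x`, i.e. `z = u v*` with `u = w x`, `v = x`.
Conversely `u v*` lies in the coset of `u v⁻¹ ∈ W_I` and has length `ℓ u + ℓ v`.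

Additivity of length needs that every element of `W_A` has a reduced word in the letters `A`,
which is the deletion property. It comes from Tits' representation of `W` on `W × ZMod 2`, in
which `s i` acts by `(t, e) ↦ (s i t s i, e + [t = s i])`: the parity of the number of
occurrences of `t` in the right inversion sequence of a word depends only on its product.
-/

open List

namespace CoxeterSystem

variable (cs : CoxeterSystem M W)

local prefix:100 "s" => cs.simple
local prefix:100 "π" => cs.wordProd
local prefix:100 "ris" => cs.rightInvSeq
local prefix:100 "lis" => cs.leftInvSeq

section SignedRepresentation

open scoped Classical

theorem prod_map_reverse_alternatingWord {G : Type*} [Monoid G] (f : B → G) (i i' : B) (m : ℕ) :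
    ((alternatingWord i' i (2 * m)).reverse.map f).prod = (f i * f i') ^ m := by
  induction m with
  | zero => simp [alternatingWord]
  | succ m ih =>
    rw [show 2 * (m + 1) = 2 * m + 1 + 1 by ring, alternatingWord_succ, alternatingWord_succ]
    simp only [concat_eq_append, reverse_append, reverse_cons, reverse_nil, nil_append,
      cons_append, map_cons, prod_cons, ih]
    rw [pow_succ', mul_assoc]

theorem wordProd_alternatingWord_add_two_mul (i i' : B) (n : ℕ) :
    π (alternatingWord i i' (n + 2 * M i i')) = π (alternatingWord i i' n) := by
  have hdiv : (n + 2 * M i i') / 2 = n / 2 + M i i' := by omega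
  simp only [prod_alternatingWord_eq_mul_pow, hdiv, pow_add, simple_mul_simple_pow, mul_one,
    Nat.even_add, even_two_mul, iff_true]

theorem count_leftInvSeq_alternatingWord (i i' : B) (t : W) :
    (((lis (alternatingWord i' i (2 * M i i'))).count t : ℕ) : ZMod 2) = 0 := by
  -- the `k`-th entry is `π (alternatingWord i i' (2 * k + 1))`, which has period `M i i'` in `k`
  set g : ℕ → W := fun k => π (alternatingWord i i' (2 * k + 1))
  have hlis : lis (alternatingWord i' i (2 * M i i')) = (range (2 * M i i')).map g := by
    refine ext_getElem (by simp) fun k hk _ => ?_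
    simp only [getElem_leftInvSeq_alternatingWord cs i' i (M i i') k (by simpa using hk),
      getElem_map, getElem_range, g]
  have hper : (range (M i i')).map (fun k => g (M i i' + k)) = (range (M i i')).map g := by
    refine map_congr_left fun k _ => ?_
    simp only [g, show 2 * (M i i' + k) + 1 = 2 * k + 1 + 2 * M i i' by ring,
      wordProd_alternatingWord_add_two_mul]
  rw [hlis, two_mul, range_add, map_append, map_map, Function.comp_def, hper, count_append,
    Nat.cast_add, CharTwo.add_self_eq_zero]

noncomputable def signedSimplePerm (i : B) : Equiv.Perm (W × ZMod 2) :=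
  Function.Involutive.toPerm (fun p => (s i * p.1 * s i, p.2 + if p.1 = s i then 1 else 0)) <| by
    rintro ⟨t, e⟩
    have h : s i * t * s i = s i ↔ t = s i := by
      constructor
      · intro h
        simpa [mul_assoc] using congrArg (fun x => s i * x * s i) h
      · rintro rfl; simp
    ext
    · simp [mul_assoc]
    · simp only [h, add_assoc, CharTwo.add_self_eq_zero, add_zero]

theorem signedSimplePerm_apply (i : B) (t : W) (e : ZMod 2) :
    cs.signedSimplePerm i (t, e) = (s i * t * s i, e + if t = s i then 1 else 0) := rfl

theorem prod_map_signedSimplePerm_apply (ω : List B) (t : W) (e : ZMod 2) :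
    (ω.map cs.signedSimplePerm).prod (t, e) =
      (π ω * t * (π ω)⁻¹, e + (ris ω).count t) := by
  induction ω with
  | nil => simp
  | cons i ω ih =>
    have hconj : π ω * t * (π ω)⁻¹ = s i ↔ (π ω)⁻¹ * s i * π ω = t := by
      constructor <;> intro h <;> rw [← h] <;> group
    simp only [map_cons, prod_cons, Equiv.Perm.mul_apply, ih, signedSimplePerm_apply,
      rightInvSeq, count_cons, beq_iff_eq, hconj, wordProd_cons, mul_inv_rev, inv_simple,
      Nat.cast_add, Nat.cast_ite, Nat.cast_one, Nat.cast_zero, add_assoc, Prod.mk.injEq, and_true]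
    group

theorem isLiftable_signedSimplePerm : M.IsLiftable cs.signedSimplePerm := by
  intro i i'
  rw [← prod_map_reverse_alternatingWord]
  ext ⟨t, e⟩ : 1
  have h1 : π (alternatingWord i' i (2 * M i i')).reverse = 1 := by
    rw [wordProd, prod_map_reverse_alternatingWord, simple_mul_simple_pow]
  rw [prod_map_signedSimplePerm_apply, h1, rightInvSeq_reverse, count_reverse,
    count_leftInvSeq_alternatingWord]
  simp

noncomputable def signedRep : W →* Equiv.Perm (W × ZMod 2) :=
  cs.lift ⟨cs.signedSimplePerm, cs.isLiftable_signedSimplePerm⟩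

theorem signedRep_wordProd_apply (ω : List B) (t : W) (e : ZMod 2) :
    cs.signedRep (π ω) (t, e) = (π ω * t * (π ω)⁻¹, e + (ris ω).count t) := by
  rw [← prod_map_signedSimplePerm_apply, wordProd, MonoidHom.map_list_prod, map_map]
  congr 3
  exact funext (cs.lift_apply_simple cs.isLiftable_signedSimplePerm)

theorem count_rightInvSeq_eq_of_wordProd_eq {ω ω' : List B} (h : π ω = π ω') (t : W) :
    ((ris ω).count t : ZMod 2) = (ris ω').count t := by
  simpa [signedRep_wordProd_apply] using congrArg (fun w => (cs.signedRep w (t, 0)).2) h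

end SignedRepresentation

theorem simple_mem_rightInvSeq_of_isRightDescent {ω : List B} {i : B}
    (hi : cs.IsRightDescent (π ω) i) : s i ∈ ris ω := by
  classical
  obtain ⟨ψ, hψ, hψω⟩ := cs.exists_isReduced (π ω * s i)
  have hconj : ((ris ψ).map (MulAut.conj (s i))).count (s i) = (ris ψ).count (s i) := by
    simpa using count_map_of_injective (ris ψ) _ (MulAut.conj (s i)).injective (s i)
  have hcount : ((ris ω).count (s i) : ZMod 2) = (ris ψ).count (s i) + 1 := by
    rw [count_rightInvSeq_eq_of_wordProd_eq cs (ω' := ψ.concat i)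
      (by rw [wordProd_concat, ← hψω, simple_mul_simple_cancel_right]),
      rightInvSeq_concat, concat_eq_append, count_append, count_singleton_self, hconj,
      Nat.cast_add, Nat.cast_one]
  -- otherwise `s i ∈ ris ψ`, and deleting that letter from `ψ` gives a word for `π ω`
  -- shorter than `ℓ (π ω)`
  by_contra hnot
  have hψi : s i ∈ ris ψ := by
    refine count_pos_iff.mp (Nat.pos_of_ne_zero fun h0 => ?_)
    rw [count_eq_zero_of_not_mem hnot, h0] at hcount
    exact absurd hcount (by decide)
  obtain ⟨j, hj, hji⟩ := mem_iff_getElem.mp hψi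
  have hword : π (ψ.eraseIdx j) = π ω := by
    rw [← wordProd_mul_getD_rightInvSeq, getD_eq_getElem _ _ hj, hji, ← hψω,
      simple_mul_simple_cancel_right]
  have hlen := cs.length_wordProd_le (ψ.eraseIdx j)
  rw [hword, length_eraseIdx, if_pos (by simpa using hj), ← hψ.eq, ← hψω] at hlen
  rw [isRightDescent_iff] at hi
  omega

theorem exists_eraseIdx_wordProd_eq_of_isRightDescent {ω : List B} {i : B}
    (hi : cs.IsRightDescent (π ω) i) :
    ∃ j < ω.length, π (ω.eraseIdx j) = π ω * s i := by
  obtain ⟨j, hj, hji⟩ := mem_iff_getElem.mp (cs.simple_mem_rightInvSeq_of_isRightDescent hi)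
  refine ⟨j, by simpa using hj, ?_⟩
  rw [← wordProd_mul_getD_rightInvSeq, getD_eq_getElem _ _ hj, hji]

theorem exists_reduced_sublist (ω : List B) :
    ∃ ω', ω' <+ ω ∧ cs.IsReduced ω' ∧ π ω' = π ω := by
  induction ω using List.reverseRecOn with
  | nil => exact ⟨[], Sublist.slnil, by simp [IsReduced], rfl⟩
  | append_singleton ω i ih =>
    obtain ⟨ρ, hsub, hρ, hρω⟩ := ih
    have hprod : π (ω ++ [i]) = π ρ * s i := by rw [wordProd_append, hρω, wordProd_singleton]
    by_cases hi : cs.IsRightDescent (π ρ) i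
    · obtain ⟨j, hj, hρj⟩ := cs.exists_eraseIdx_wordProd_eq_of_isRightDescent hi
      refine ⟨ρ.eraseIdx j, (eraseIdx_sublist ρ j).trans (hsub.trans (sublist_append_left _ _)),
        ?_, by rw [hρj, hprod]⟩
      rw [isRightDescent_iff] at hi
      rw [IsReduced, hρj, length_eraseIdx, if_pos hj, ← hρ.eq]
      omega
    · refine ⟨ρ ++ [i], hsub.append_right _, ?_, by rw [hprod, wordProd_append, wordProd_singleton]⟩
      rw [not_isRightDescent_iff] at hi
      rw [IsReduced, wordProd_append, wordProd_singleton, hi, length_append, hρ.eq]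
      rfl

theorem wordProd_mem_parab {A : Set B} {ω : List B} (hω : ∀ b ∈ ω, b ∈ A) :
    π ω ∈ parab cs A := by
  induction ω with
  | nil => exact one_mem _
  | cons i ω ih =>
    rw [wordProd_cons]
    exact mul_mem (Subgroup.subset_closure ⟨i, hω i mem_cons_self, rfl⟩)
      (ih fun b hb => hω b (mem_cons_of_mem i hb))

theorem exists_word_of_mem_parab {A : Set B} {w : W} (hw : w ∈ parab cs A) :
    ∃ ω : List B, (∀ b ∈ ω, b ∈ A) ∧ π ω = w := by
  induction hw using Subgroup.closure_induction with
  | mem x hx =>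
    obtain ⟨i, hi, rfl⟩ := hx
    exact ⟨[i], by simpa using hi, wordProd_singleton cs i⟩
  | one => exact ⟨[], by simp, wordProd_nil cs⟩
  | mul x y _ _ ihx ihy =>
    obtain ⟨ω, hω, rfl⟩ := ihx
    obtain ⟨ω', hω', rfl⟩ := ihy
    exact ⟨ω ++ ω', fun b hb => (mem_append.mp hb).elim (hω b) (hω' b), wordProd_append cs ω ω'⟩
  | inv x _ ihx =>
    obtain ⟨ω, hω, rfl⟩ := ihx
    exact ⟨ω.reverse, by simpa using hω, wordProd_reverse cs ω⟩

theorem exists_reduced_word_of_mem_parab {A : Set B} {w : W} (hw : w ∈ parab cs A) :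
    ∃ ω : List B, (∀ b ∈ ω, b ∈ A) ∧ cs.IsReduced ω ∧ π ω = w := by
  obtain ⟨ω, hω, rfl⟩ := cs.exists_word_of_mem_parab hw
  obtain ⟨ω', hsub, hred, hω'⟩ := cs.exists_reduced_sublist ω
  exact ⟨ω', fun b hb => hω b (hsub.subset hb), hred, hω'⟩

theorem exists_simple_eq_of_simple_mem_parab {A : Set B} {i : B} (hi : s i ∈ parab cs A) :
    ∃ a ∈ A, s a = s i := by
  obtain ⟨ω, hω, hred, hωi⟩ := cs.exists_reduced_word_of_mem_parab hi
  obtain ⟨a, rfl⟩ : ∃ a, ω = [a] := by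
    rw [← List.length_eq_one_iff, ← hred.eq, hωi, length_simple]
  exact ⟨a, hω a mem_cons_self, by simpa using hωi⟩

theorem exists_isRightDescent_of_mem_parab {A : Set B} {w : W} (hw : w ∈ parab cs A)
    (hw1 : w ≠ 1) : ∃ i ∈ A, cs.IsRightDescent w i := by
  obtain ⟨ω, hω, hred, rfl⟩ := cs.exists_reduced_word_of_mem_parab hw
  obtain ⟨ω, i, rfl⟩ := (eq_nil_or_concat ω).resolve_left (by rintro rfl; exact hw1 rfl)
  refine ⟨i, hω i (by simp), ?_⟩
  have hle := cs.length_wordProd_le ω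
  rw [IsRightDescent, wordProd_concat, simple_mul_simple_cancel_right, ← wordProd_concat,
    hred.eq, length_concat]
  omega

theorem commute_of_mem_parab {A A' : Set B} (hAA' : ∀ a ∈ A, ∀ a' ∈ A', Commute (s a) (s a'))
    {x y : W} (hx : x ∈ parab cs A) (hy : y ∈ parab cs A') : Commute x y := by
  have hle : parab cs A ≤ Subgroup.centralizer (parab cs A') := by
    rw [parab, parab, Subgroup.closure_le, Subgroup.centralizer_closure]
    rintro _ ⟨a, ha, rfl⟩ _ ⟨a', ha', rfl⟩
    exact (hAA' a ha a' ha').symm.eq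
  exact (Subgroup.mem_centralizer_iff.mp (hle hx) y hy).symm

theorem parab_mono {A A' : Set B} (hAA' : A ⊆ A') : parab cs A ≤ parab cs A' :=
  Subgroup.closure_mono (Set.image_mono hAA')

theorem mul_mul_mem_parab_union {A A' A'' : Set B} {p q r : W} (hp : p ∈ parab cs A)
    (hq : q ∈ parab cs A') (hr : r ∈ parab cs A'') : p * q * r ∈ parab cs (A ∪ A' ∪ A'') :=
  mul_mem (mul_mem (cs.parab_mono (Set.subset_union_left.trans Set.subset_union_left) hp)
    (cs.parab_mono (Set.subset_union_right.trans Set.subset_union_left) hq))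
    (cs.parab_mono Set.subset_union_right hr)

end CoxeterSystem

namespace GoodSetup

open CoxeterSystem

variable {cs : CoxeterSystem M W} {I J K : Set B} {σ : W → W}

local prefix:100 "s" => cs.simple
local prefix:100 "π" => cs.wordProd
local prefix:100 "ℓ" => cs.length

theorem exists_words_of_forall_mem_union (h : GoodSetup cs I J K σ) {ω : List B}
    (hω : ∀ b ∈ ω, b ∈ I ∪ J ∪ K) :
    ∃ ω₁ ω₂ ω₃ : List B, (∀ b ∈ ω₁, b ∈ I) ∧ (∀ b ∈ ω₂, b ∈ J) ∧ (∀ b ∈ ω₃, b ∈ K) ∧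
      π ω = π ω₁ * π ω₂ * π ω₃ ∧ ω.length = ω₁.length + ω₂.length + ω₃.length := by
  induction ω with
  | nil => exact ⟨[], [], [], by simp, by simp, by simp, by simp, by simp⟩
  | cons x ω ih =>
    obtain ⟨ω₁, ω₂, ω₃, h₁, h₂, h₃, hprod, hlen⟩ := ih fun b hb => hω b (mem_cons_of_mem x hb)
    rcases hω x mem_cons_self with (hxI | hxJ) | hxK
    · refine ⟨x :: ω₁, ω₂, ω₃, forall_mem_cons.mpr ⟨hxI, h₁⟩, h₂, h₃, ?_, by simp [hlen]; omega⟩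
      simp only [wordProd_cons, hprod, mul_assoc]
    · have hc : Commute (s x) (π ω₁) := (cs.commute_of_mem_parab h.commIJ
        (cs.wordProd_mem_parab h₁) (Subgroup.subset_closure ⟨x, hxJ, rfl⟩)).symm
      refine ⟨ω₁, x :: ω₂, ω₃, h₁, forall_mem_cons.mpr ⟨hxJ, h₂⟩, h₃, ?_, by simp [hlen]; omega⟩
      simp only [wordProd_cons, hprod, mul_assoc, hc.left_comm]
    · have hc₁ : Commute (s x) (π ω₁) := (cs.commute_of_mem_parab h.commIK
        (cs.wordProd_mem_parab h₁) (Subgroup.subset_closure ⟨x, hxK, rfl⟩)).symm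
      have hc₂ : Commute (s x) (π ω₂) := (cs.commute_of_mem_parab h.commJK
        (cs.wordProd_mem_parab h₂) (Subgroup.subset_closure ⟨x, hxK, rfl⟩)).symm
      refine ⟨ω₁, ω₂, x :: ω₃, h₁, h₂, forall_mem_cons.mpr ⟨hxK, h₃⟩, ?_, by simp [hlen]; omega⟩
      simp only [wordProd_cons, hprod, mul_assoc, hc₁.left_comm, hc₂.left_comm]

theorem exists_mul_mul_eq (h : GoodSetup cs I J K σ) {w : W} (hw : w ∈ parab cs (I ∪ J ∪ K)) :
    ∃ p ∈ parab cs I, ∃ q ∈ parab cs J, ∃ r ∈ parab cs K, w = p * q * r := by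
  obtain ⟨ω, hω, rfl⟩ := cs.exists_word_of_mem_parab hw
  obtain ⟨ω₁, ω₂, ω₃, h₁, h₂, h₃, hprod, -⟩ := h.exists_words_of_forall_mem_union hω
  exact ⟨_, cs.wordProd_mem_parab h₁, _, cs.wordProd_mem_parab h₂, _,
    cs.wordProd_mem_parab h₃, hprod⟩

theorem eq_of_mul_mul_eq (h : GoodSetup cs I J K σ) {p q r p' q' r' : W}
    (hp : p ∈ parab cs I) (hq : q ∈ parab cs J) (hr : r ∈ parab cs K)
    (hp' : p' ∈ parab cs I) (hq' : q' ∈ parab cs J) (hr' : r' ∈ parab cs K)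
    (heq : p * q * r = p' * q' * r') : p = p' ∧ q = q' ∧ r = r' := by
  obtain ⟨a, ha, rfl⟩ : ∃ a ∈ parab cs I, p = p' * a :=
    ⟨p'⁻¹ * p, mul_mem (inv_mem hp') hp, by group⟩
  obtain ⟨b, hb, rfl⟩ : ∃ b ∈ parab cs J, q = q' * b :=
    ⟨q'⁻¹ * q, mul_mem (inv_mem hq') hq, by group⟩
  obtain ⟨c, hc, rfl⟩ : ∃ c ∈ parab cs K, r = r' * c :=
    ⟨r'⁻¹ * r, mul_mem (inv_mem hr') hr, by group⟩
  have haq := cs.commute_of_mem_parab h.commIJ ha hq'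
  have har := cs.commute_of_mem_parab h.commIK ha hr'
  have hbr := cs.commute_of_mem_parab h.commJK hb hr'
  have habc : a * b * c = 1 := by
    simpa [mul_assoc, haq.left_comm, har.left_comm, hbr.left_comm] using heq
  obtain ⟨rfl, rfl, rfl⟩ := h.directProd a ha b hb c hc habc
  simp

theorem length_mul_mul (h : GoodSetup cs I J K σ) {p q r : W}
    (hp : p ∈ parab cs I) (hq : q ∈ parab cs J) (hr : r ∈ parab cs K) :
    ℓ (p * q * r) = ℓ p + ℓ q + ℓ r := by
  obtain ⟨ω, hω, hred, hωpqr⟩ :=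
    cs.exists_reduced_word_of_mem_parab (cs.mul_mul_mem_parab_union hp hq hr)
  obtain ⟨ω₁, ω₂, ω₃, h₁, h₂, h₃, hprod, hlen⟩ := h.exists_words_of_forall_mem_union hω
  obtain ⟨rfl, rfl, rfl⟩ := h.eq_of_mul_mul_eq (cs.wordProd_mem_parab h₁)
    (cs.wordProd_mem_parab h₂) (cs.wordProd_mem_parab h₃) hp hq hr (hprod ▸ hωpqr)
  have := cs.length_wordProd_le ω₁
  have := cs.length_wordProd_le ω₂
  have := cs.length_wordProd_le ω₃
  have := cs.length_mul_le (π ω₁ * π ω₂) (π ω₃)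
  have := cs.length_mul_le (π ω₁) (π ω₂)
  have : ℓ (π ω₁ * π ω₂ * π ω₃) = ω₁.length + ω₂.length + ω₃.length := by
    rw [← hprod, hred.eq, hlen]
  omega

theorem map_one (h : GoodSetup cs I J K σ) : σ 1 = 1 := by
  simpa using h.mulSigma 1 (one_mem _) 1 (one_mem _)

theorem map_wordProd (h : GoodSetup cs I J K σ) {ω ψ : List B}
    (hωψ : Forall₂ (fun i j => i ∈ I ∧ σ (s i) = s j) ω ψ) : σ (π ω) = π ψ := by
  induction hωψ with
  | nil => exact h.map_one
  | @cons i j ω ψ hij htail ih =>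
    rw [wordProd_cons, wordProd_cons, ← hij.2, ← ih]
    exact h.mulSigma _ (Subgroup.subset_closure ⟨i, hij.1, rfl⟩) _
      (cs.wordProd_mem_parab ((forall₂_and_left _ _).mp htail).1)

theorem exists_simple_preimage (h : GoodSetup cs I J K σ) {j : B} (hj : j ∈ J) :
    ∃ i ∈ I, σ (s i) = s j := by
  choose! f hf using h.simpleSigma
  obtain ⟨x, hx, hxj⟩ := h.bijSigma.surjOn (Subgroup.subset_closure ⟨j, hj, rfl⟩)
  obtain ⟨ω, hω, rfl⟩ := cs.exists_word_of_mem_parab hx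
  have hmem : s j ∈ parab cs {j' | ∃ i ∈ I, σ (s i) = s j'} := by
    rw [← hxj, h.map_wordProd (ψ := ω.map f) (forall₂_map_right_iff.mpr
      (forall₂_same.mpr fun i hi => ⟨hω i hi, (hf i (hω i hi)).2⟩))]
    exact cs.wordProd_mem_parab (by simpa using fun i hi => ⟨i, hω i hi, (hf i (hω i hi)).2⟩)
  obtain ⟨j', ⟨i, hi, hij'⟩, hj'⟩ := cs.exists_simple_eq_of_simple_mem_parab hmem
  exact ⟨i, hi, hij'.trans hj'⟩

theorem length_map (h : GoodSetup cs I J K σ) {x : W} (hx : x ∈ parab cs I) :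
    ℓ (σ x) = ℓ x := by
  apply le_antisymm
  · choose! f hf using h.simpleSigma
    obtain ⟨ω, hω, hred, rfl⟩ := cs.exists_reduced_word_of_mem_parab hx
    rw [h.map_wordProd (ψ := ω.map f) (forall₂_map_right_iff.mpr
      (forall₂_same.mpr fun i hi => ⟨hω i hi, (hf i (hω i hi)).2⟩)), hred.eq]
    simpa using cs.length_wordProd_le (ω.map f)
  · choose! g hg using fun j (hj : j ∈ J) => h.exists_simple_preimage hj
    obtain ⟨ψ, hψ, hred, hψx⟩ := cs.exists_reduced_word_of_mem_parab (h.bijSigma.mapsTo hx)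
    have hσ : σ (π (ψ.map g)) = π ψ := h.map_wordProd
      (forall₂_map_left_iff.mpr (forall₂_same.mpr fun j hj => hg j (hψ j hj)))
    have hgx : π (ψ.map g) = x := h.bijSigma.injOn
      (cs.wordProd_mem_parab (by simpa using fun j hj => (hg j (hψ j hj)).1)) hx (hσ.trans hψx)
    rw [← hψx, hred.eq, ← hgx]
    simpa using cs.length_wordProd_le (ψ.map g)

theorem mul_mul_mem_minReps_iff (h : GoodSetup cs I J K σ) {p q r : W}
    (hp : p ∈ parab cs I) (hq : q ∈ parab cs J) (hr : r ∈ parab cs K) :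
    p * q * r ∈ minReps cs (J ∪ K) ↔ q = 1 ∧ r = 1 := by
  constructor
  · intro hmin
    have hℓ := h.length_mul_mul hp hq hr
    constructor
    · by_contra hq1
      obtain ⟨j, hj, hdesc⟩ := cs.exists_isRightDescent_of_mem_parab hq hq1
      have hsj : s j ∈ parab cs J := Subgroup.subset_closure ⟨j, hj, rfl⟩
      have hc : Commute r (s j) := cs.commute_of_mem_parab
        (fun k hk j hj => (h.commJK j hj k hk).symm) hr hsj
      have hlt := hmin j (Or.inl hj)
      rw [show p * q * r * s j = p * (q * s j) * r by simp [mul_assoc, hc.eq],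
        h.length_mul_mul hp (mul_mem hq hsj) hr, hℓ] at hlt
      exact absurd hdesc (by rw [IsRightDescent]; omega)
    · by_contra hr1
      obtain ⟨k, hk, hdesc⟩ := cs.exists_isRightDescent_of_mem_parab hr hr1
      have hlt := hmin k (Or.inr hk)
      rw [mul_assoc _ r, h.length_mul_mul hp hq (mul_mem hr (Subgroup.subset_closure ⟨k, hk, rfl⟩)),
        hℓ] at hlt
      exact absurd hdesc (by rw [IsRightDescent]; omega)
  · rintro ⟨rfl, rfl⟩ i hi
    have hℓ : ℓ (p * s i) = ℓ p + 1 := by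
      rcases hi with hi | hi
      · simpa using h.length_mul_mul hp (Subgroup.subset_closure ⟨i, hi, rfl⟩) (one_mem _)
      · simpa using h.length_mul_mul hp (one_mem _) (Subgroup.subset_closure ⟨i, hi, rfl⟩)
    simp [hℓ]

theorem exists_eq_mul_map_of_mem_Mset (h : GoodSetup cs I J K σ) {z : W}
    (hz : z ∈ Mset cs I J K σ) (hzL : z ∈ parab cs (I ∪ J ∪ K)) :
    ∃ u ∈ parab cs I, ∃ v ∈ parab cs I, z = u * σ v ∧ ℓ (u * v⁻¹) = ℓ u + ℓ v := by
  obtain ⟨w, hw, ⟨a, ha, x, hx, rfl⟩, hlen⟩ := hz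
  have hσx : σ x ∈ parab cs J := h.bijSigma.mapsTo hx
  have hcomm : a * (x * σ x) = x * σ x * a :=
    ((cs.commute_of_mem_parab h.commIK hx ha).mul_left
      (cs.commute_of_mem_parab h.commJK hσx ha)).symm.eq
  have hwL : w ∈ parab cs (I ∪ J ∪ K) := by
    rw [mul_assoc, hcomm] at hzL
    exact (Subgroup.mul_mem_cancel_right _ (cs.mul_mul_mem_parab_union hx hσx ha)).mp hzL
  obtain ⟨p, hp, q, hq, r, hr, rfl⟩ := h.exists_mul_mul_eq hwL
  obtain ⟨rfl, rfl⟩ := (h.mul_mul_mem_minReps_iff hp hq hr).mp hw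
  have hz : p * 1 * 1 * a * (x * σ x) = p * x * σ x * a := by
    simp only [mul_one, mul_assoc, hcomm]
  rw [hz, h.length_mul_mul (mul_mem hp hx) hσx ha, h.length_map hx, mul_one, mul_one] at hlen
  have htri : ℓ p ≤ ℓ (p * x) + ℓ x := by simpa using cs.length_mul_le (p * x) x⁻¹
  obtain rfl : a = 1 := cs.length_eq_zero_iff.mp (by omega)
  exact ⟨p * x, mul_mem hp hx, x, hx, by rw [hz, mul_one], by simp; omega⟩

theorem mul_map_mem_Mset (h : GoodSetup cs I J K σ) {u v : W} (hu : u ∈ parab cs I)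
    (hv : v ∈ parab cs I) (huv : ℓ (u * v⁻¹) = ℓ u + ℓ v) : u * σ v ∈ Mset cs I J K σ := by
  have hw : u * v⁻¹ ∈ parab cs I := mul_mem hu (inv_mem hv)
  refine ⟨u * v⁻¹, ?_, ⟨1, one_mem _, v, hv, by group⟩, ?_⟩
  · simpa using (h.mul_mul_mem_minReps_iff hw (one_mem _) (one_mem _)).mpr ⟨rfl, rfl⟩
  · simpa [h.length_map hv, huv] using
      h.length_mul_mul hu (h.bijSigma.mapsTo hv) (one_mem (parab cs K))

end GoodSetup

theorem statement_10 (cs : CoxeterSystem M W) (I J K : Set B) (σ : W → W)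
    (h : GoodSetup cs I J K σ) :
    Mset cs I J K σ ∩ (parab cs (I ∪ J ∪ K) : Set W) =
      {z : W | ∃ u ∈ parab cs I, ∃ v ∈ parab cs I,
        z = u * σ v ∧ cs.length (u * v⁻¹) = cs.length u + cs.length v} := by
  ext z
  constructor
  · rintro ⟨hz, hzL⟩
    exact h.exists_eq_mul_map_of_mem_Mset hz hzL
  · rintro ⟨u, hu, v, hv, rfl, huv⟩
    refine ⟨h.mul_map_mem_Mset hu hv huv, ?_⟩
    simpa using cs.mul_mul_mem_parab_union hu (h.bijSigma.mapsTo hv) (one_mem (parab cs K))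

end BruhatSetup
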